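/- The element vol₃^{•2} ∈ ℝ⟨1,2,3⟩ vanishes on all piecewise linear paths with at most 5 control points (i.e., at most 4 segments): ⟨S(X), vol₃^{•2}⟩ = 0 whenever X is piecewise linear with at most 4 linear segments in ℝ³. -/

import Mathlib

open MeasureTheory

noncomputable section

/-- Iterated-integral signature of a path `X` (restricted to `[0,1]`) at a word:
`∫_{0 ≤ t₁ ≤ ⋯ ≤ t_k ≤ 1} X'_{i₁}(t₁) ⋯ X'_{i_k}(t_k) dt`. -/
def sig {d : ℕ} (X : ℝ → Fin d → ℝ) (w : List (Fin d)) : ℝ :=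
  ∫ t in {t : Fin w.length → ℝ | (∀ i, t i ∈ Set.Icc (0:ℝ) 1) ∧ Monotone t},
    ∏ i : Fin w.length, deriv (fun s => X s (w.get i)) (t i)

/-- The piecewise linear path with control points `x 0 → x 1 → ⋯ → x n`,
parametrized uniformly on `[0,1]`. -/
def pwl {d n : ℕ} (x : Fin (n + 1) → Fin d → ℝ) (t : ℝ) : Fin d → ℝ := fun j =>
  if t ≤ 0 then x 0 j
  else if 1 ≤ t then x (Fin.last n) j
  else
    let i : ℕ := ⌊t * (n : ℝ)⌋.toNat
    x ⟨min i n, Nat.lt_succ_of_le (min_le_right _ _)⟩ j +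
      (t * (n : ℝ) - (i : ℝ)) *
        (x ⟨min (i + 1) n, Nat.lt_succ_of_le (min_le_right _ _)⟩ j -
          x ⟨min i n, Nat.lt_succ_of_le (min_le_right _ _)⟩ j)

/-- The free associative algebra `ℝ⟨1,…,d⟩` with words as basis. -/
abbrev FreeTensor (d : ℕ) := MonoidAlgebra ℝ (FreeMonoid (Fin d))

/-- Pairing `⟨S(X), p⟩` of the signature of a path with an element of `ℝ⟨1,…,d⟩`. -/
noncomputable def sigPair {d : ℕ} (X : ℝ → Fin d → ℝ) (p : FreeTensor d) : ℝ :=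
  p.coeff.sum fun w c => c * sig X (FreeMonoid.toList w)

/-- Shuffle product of two words, as an element of `ℝ⟨1,…,d⟩`. -/
noncomputable def shW {d : ℕ} : List (Fin d) → List (Fin d) → FreeTensor d
  | [], v => MonoidAlgebra.ofCoeff (Finsupp.single (FreeMonoid.ofList v) 1)
  | a :: u, [] => MonoidAlgebra.ofCoeff (Finsupp.single (FreeMonoid.ofList (a :: u)) 1)
  | a :: u, b :: v =>
      MonoidAlgebra.ofCoeff (Finsupp.mapDomain (fun m => FreeMonoid.of a * m) (shW u (b :: v)).coeff) +
        MonoidAlgebra.ofCoeff (Finsupp.mapDomain (fun m => FreeMonoid.of b * m) (shW (a :: u) v).coeff)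
  termination_by u v => u.length + v.length

/-- The shuffle product `⧢` on `ℝ⟨1,…,d⟩`, extended bilinearly from words. -/
noncomputable def shuffle {d : ℕ} (p q : FreeTensor d) : FreeTensor d :=
  p.coeff.sum fun u a => q.coeff.sum fun v b => (a * b) • shW (FreeMonoid.toList u) (FreeMonoid.toList v)

/-- The antipode, sending a word of length `k` to `(−1)^k` times its reversal. -/
noncomputable def antipode {d : ℕ} (p : FreeTensor d) : FreeTensor d :=
  p.coeff.sum fun w c =>
    MonoidAlgebra.ofCoeff (Finsupp.single (FreeMonoid.ofList (FreeMonoid.toList w).reverse)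
      ((-1 : ℝ) ^ (FreeMonoid.toList w).length * c))

/-- The signed-volume element `vol_d = Σ_{σ ∈ S_d} sgn(σ) σ(1)⋯σ(d)`. -/
noncomputable def volElt (d : ℕ) : FreeTensor d :=
  ∑ σ : Equiv.Perm (Fin d),
    ((Equiv.Perm.sign σ : ℤ) : ℝ) •
      MonoidAlgebra.ofCoeff (Finsupp.single (FreeMonoid.ofList (List.ofFn fun i => σ i)) (1 : ℝ))

/-!
On the piece `(k/n, (k+1)/n)` the path `pwl x` moves with constant velocity `v_k`, so the
iterated integral of a word `f` of length `m` along it is `∑_k w_k ∏ᵢ v_{k i}(f i)`, summed over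
all assignments `k` of a piece to each letter, where `w_k` is the volume of the part of the
simplex `0 ≤ t₁ ≤ ⋯ ≤ t_m ≤ 1` lying in the box of pieces `k`; this weight vanishes unless `k`
is monotone. Pairing with `vol_d • vol_d` collects the products
of velocities into `det(v_{k₁}, …, v_{k_d}) · det(v_{k_{d+1}}, …, v_{k_{2d}})`. For monotone `k`
both determinants are nonzero only if `k` is injective on each half, which forces `k` to take
`2d - 1` distinct values. With at most `2d - 2` pieces (`4` for `d = 3`) every term vanishes.
-/

namespace PiecewiseLinearSignature

open Set Finset Function

variable {d n m : ℕ}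

def pieceInterval (n : ℕ) (k : Fin n) : Set ℝ := Ioo (k / n) ((k + 1) / n)

def pieceVelocity (x : Fin (n + 1) → Fin d → ℝ) (k : Fin n) : Fin d → ℝ :=
  (n : ℝ) • (x k.succ - x k.castSucc)

lemma pwl_of_fin_one (x : Fin 1 → Fin d → ℝ) : pwl x = fun _ => x 0 := by
  funext t j
  simp [pwl]

lemma pwl_of_mem_pieceInterval (x : Fin (n + 1) → Fin d → ℝ) {k : Fin n} {t : ℝ}
    (ht : t ∈ pieceInterval n k) :
    pwl x t = x k.castSucc + (t * n - k) • (x k.succ - x k.castSucc) := by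
  obtain ⟨hlo, hhi⟩ := ht
  have hn : (0 : ℝ) < n := by exact_mod_cast k.pos
  rw [div_lt_iff₀ hn] at hlo
  rw [lt_div_iff₀ hn] at hhi
  have hk : (k : ℝ) + 1 ≤ n := by exact_mod_cast k.isLt
  have hfloor : ⌊t * n⌋.toNat = k := by
    rw [Int.floor_eq_iff.2 (show ((k : ℤ) : ℝ) ≤ t * n ∧ t * n < (k : ℤ) + 1 by
      push_cast; constructor <;> linarith), Int.toNat_natCast]
  have hpos : ¬ t ≤ 0 := by nlinarith
  have hlt : ¬ 1 ≤ t := by nlinarith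
  funext j
  simp [pwl, hpos, hlt, hfloor, k.isLt.le, k.isLt, Fin.castSucc, Fin.succ, Fin.castAdd,
    Fin.castLE]

lemma hasDerivAt_pwl (x : Fin (n + 1) → Fin d → ℝ) {k : Fin n} {t : ℝ}
    (ht : t ∈ pieceInterval n k) : HasDerivAt (pwl x) (pieceVelocity x k) t := by
  have hline : HasDerivAt (fun s : ℝ => x k.castSucc + (s * n - k) • (x k.succ - x k.castSucc))
      (pieceVelocity x k) t := by
    simpa [pieceVelocity] using
      ((((hasDerivAt_id t).mul_const (n : ℝ)).sub_const (k : ℝ)).smul_const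
        (x k.succ - x k.castSucc)).const_add (x k.castSucc)
  refine hline.congr_of_eventuallyEq ?_
  filter_upwards [isOpen_Ioo.mem_nhds ht] with s hs
  exact pwl_of_mem_pieceInterval x hs

lemma eq_of_mem_pieceInterval {k l : Fin n} {t : ℝ} (hk : t ∈ pieceInterval n k)
    (hl : t ∈ pieceInterval n l) : k = l := by
  have hn : (0 : ℝ) < n := by exact_mod_cast k.pos
  simp only [pieceInterval, Set.mem_Ioo, div_lt_iff₀ hn, lt_div_iff₀ hn] at hk hl
  have h₁ : (k : ℝ) < l + 1 := by linarith
  have h₂ : (l : ℝ) < k + 1 := by linarith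
  norm_cast at h₁ h₂
  omega

lemma exists_mem_pieceInterval (hn : 0 < n) {t : ℝ} (ht : t ∈ Icc (0 : ℝ) 1)
    (hgrid : t ∉ range fun q : ℕ => (q : ℝ) / n) : ∃ k, t ∈ pieceInterval n k := by
  have hn' : (0 : ℝ) < n := by exact_mod_cast hn
  have hne : (⌊t * n⌋₊ : ℝ) ≠ t * n := fun h =>
    hgrid ⟨⌊t * n⌋₊, by simp only [h, mul_div_cancel_right₀ _ hn'.ne']⟩
  have hlo : (⌊t * n⌋₊ : ℝ) < t * n :=
    (Nat.floor_le (by nlinarith [ht.1])).lt_of_ne hne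
  have hlt : ⌊t * n⌋₊ < n := by
    exact_mod_cast hlo.trans_le (show t * n ≤ n by nlinarith [ht.2])
  refine ⟨⟨⌊t * n⌋₊, hlt⟩, ?_, ?_⟩
  · rwa [div_lt_iff₀ hn']
  · rw [lt_div_iff₀ hn']
    exact Nat.lt_floor_add_one _

lemma deriv_pwl_apply (x : Fin (n + 1) → Fin d → ℝ) (j : Fin d) {t : ℝ}
    (ht : t ∈ Icc (0 : ℝ) 1) (hgrid : t ∉ range fun q : ℕ => (q : ℝ) / n) :
    deriv (fun s => pwl x s j) t =
      ∑ k, (pieceInterval n k).indicator (fun _ => pieceVelocity x k j) t := by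
  rcases Nat.eq_zero_or_pos n with rfl | hn
  · simp [pwl_of_fin_one]
  obtain ⟨k, hk⟩ := exists_mem_pieceInterval hn ht hgrid
  rw [(hasDerivAt_pi.1 (hasDerivAt_pwl x hk) j).deriv, sum_eq_single k, indicator_of_mem hk]
  · exact fun l _ hlk => indicator_of_notMem (fun hl => hlk (eq_of_mem_pieceInterval hl hk)) _
  · simp

def orderedSimplex (m : ℕ) : Set (Fin m → ℝ) := {t | (∀ i, t i ∈ Icc (0 : ℝ) 1) ∧ Monotone t}

lemma isCompact_orderedSimplex (m : ℕ) : IsCompact (orderedSimplex m) := by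
  have hclosed : IsClosed (orderedSimplex m) := by
    rw [orderedSimplex, ofPred_and, ofPred_forall]
    exact (isClosed_iInter fun i => isClosed_Icc.preimage (continuous_apply i)).inter
      isClosed_monotone
  exact (isCompact_univ_pi fun _ => isCompact_Icc).of_isClosed_subset hclosed
    fun _ ht i _ => ht.1 i

def pieceBox (k : Fin m → Fin n) : Set (Fin m → ℝ) := Set.univ.pi fun i => pieceInterval n (k i)

def pieceWeight (k : Fin m → Fin n) : ℝ := volume.real (orderedSimplex m ∩ pieceBox k)

lemma monotone_of_mem_orderedSimplex_inter_pieceBox {k : Fin m → Fin n} {t : Fin m → ℝ}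
    (ht : t ∈ orderedSimplex m ∩ pieceBox k) : Monotone k := by
  intro i j hij
  have hn : (0 : ℝ) < n := by exact_mod_cast (k i).pos
  have hi := (ht.2 i trivial).1
  have hj := (ht.2 j trivial).2
  rw [div_lt_iff₀ hn] at hi
  rw [lt_div_iff₀ hn] at hj
  have hlt : (k i : ℝ) < k j + 1 := by nlinarith [ht.1.2 hij]
  norm_cast at hlt
  exact Fin.le_iff_val_le_val.2 (Nat.lt_succ_iff.1 hlt)

lemma pieceWeight_eq_zero_of_not_monotone {k : Fin m → Fin n} (hk : ¬ Monotone k) :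
    pieceWeight k = 0 := by
  rw [pieceWeight, eq_empty_of_forall_notMem fun t ht =>
    hk (monotone_of_mem_orderedSimplex_inter_pieceBox ht), measureReal_empty]

lemma prod_indicator_apply_eq_indicator_pi {ι α R : Type*} [Fintype ι] [CommMonoidWithZero R]
    (A : ι → Set α) (c : ι → R) (t : ι → α) :
    ∏ i, (A i).indicator (fun _ => c i) (t i) =
      (Set.univ.pi A).indicator (fun _ => ∏ i, c i) t := by
  by_cases ht : t ∈ Set.univ.pi A
  · rw [indicator_of_mem ht]
    exact prod_congr rfl fun i _ => indicator_of_mem (ht i trivial) _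
  · obtain ⟨i, -, hi⟩ := not_forall₂.1 ht
    rw [indicator_of_notMem ht]
    exact prod_eq_zero (mem_univ i) (indicator_of_notMem hi _)

def iteratedIntegral (X : ℝ → Fin d → ℝ) (f : Fin m → Fin d) : ℝ :=
  ∫ t in orderedSimplex m, ∏ i, deriv (fun s => X s (f i)) (t i)

lemma sig_ofFn (X : ℝ → Fin d → ℝ) (f : Fin m → Fin d) :
    sig X (List.ofFn f) = iteratedIntegral X f := by
  have key : ∀ (w : List (Fin d)) (h : w.length = m), (∀ i, w.get i = f (i.cast h)) →
      sig X w = iteratedIntegral X f := by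
    rintro w rfl hw
    exact congrArg (iteratedIntegral X) (funext hw)
  exact key _ List.length_ofFn fun i => by simp [Fin.cast]

lemma prod_deriv_pwl_eq_sum_indicator (x : Fin (n + 1) → Fin d → ℝ) (f : Fin m → Fin d)
    {t : Fin m → ℝ} (ht : t ∈ orderedSimplex m)
    (hgrid : ∀ i, t i ∉ range fun q : ℕ => (q : ℝ) / n) :
    ∏ i, deriv (fun s => pwl x s (f i)) (t i) =
      ∑ k : Fin m → Fin n,
        (pieceBox k).indicator (fun _ => ∏ i, pieceVelocity x (k i) (f i)) t := by
  simp_rw [deriv_pwl_apply x _ (ht.1 _) (hgrid _), Fintype.prod_sum,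
    prod_indicator_apply_eq_indicator_pi]
  rfl

lemma iteratedIntegral_pwl (x : Fin (n + 1) → Fin d → ℝ) (f : Fin m → Fin d) :
    iteratedIntegral (pwl x) f =
      ∑ k : Fin m → Fin n, pieceWeight k * ∏ i, pieceVelocity x (k i) (f i) := by
  have hS := isCompact_orderedSimplex m
  have hgrid : ∀ᵐ t : Fin m → ℝ, ∀ i, t i ∉ range fun q : ℕ => (q : ℝ) / n :=
    ae_all_iff.2 fun i => Measure.tendsto_eval_ae_ae.eventually ((countable_range _).ae_notMem _)
  have hbox (k : Fin m → Fin n) : MeasurableSet (pieceBox k) :=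
    MeasurableSet.univ_pi fun _ => measurableSet_Ioo
  rw [iteratedIntegral, setIntegral_congr_ae hS.measurableSet
    (hgrid.mono fun t ht hS => prod_deriv_pwl_eq_sum_indicator x f hS ht), integral_finsetSum]
  · refine sum_congr rfl fun k _ => ?_
    rw [setIntegral_indicator (hbox k), setIntegral_const, smul_eq_mul, pieceWeight]
  · exact fun k _ => (integrableOn_const hS.measure_lt_top.ne).indicator (hbox k)

def sigPairAddHom (X : ℝ → Fin d → ℝ) : FreeTensor d →+ ℝ :=
  (Finsupp.liftAddHom fun w => AddMonoidHom.mulRight (sig X (FreeMonoid.toList w))).comp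
    MonoidAlgebra.coeffAddEquiv.toAddMonoidHom

lemma sigPairAddHom_apply (X : ℝ → Fin d → ℝ) (p : FreeTensor d) :
    sigPairAddHom X p = sigPair X p := rfl

lemma sigPair_single (X : ℝ → Fin d → ℝ) (w : FreeMonoid (Fin d)) (c : ℝ) :
    sigPair X (MonoidAlgebra.single w c) = c * sig X (FreeMonoid.toList w) := by
  rw [sigPair, MonoidAlgebra.coeff_single, Finsupp.sum_single_index (zero_mul _)]

lemma sigPair_volElt_mul_volElt (X : ℝ → Fin d → ℝ) :
    sigPair X (volElt d * volElt d) =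
      ∑ σ : Equiv.Perm (Fin d), ∑ τ : Equiv.Perm (Fin d),
        ((Equiv.Perm.sign σ : ℤ) : ℝ) * ((Equiv.Perm.sign τ : ℤ) : ℝ) *
          iteratedIntegral X (Fin.append σ τ) := by
  rw [← sigPairAddHom_apply, volElt, sum_mul_sum, map_sum]
  refine sum_congr rfl fun σ _ => ?_
  rw [map_sum]
  refine sum_congr rfl fun τ _ => ?_
  rw [MonoidAlgebra.ofCoeff_single, MonoidAlgebra.ofCoeff_single, smul_mul_smul,
    MonoidAlgebra.single_mul_single, mul_one, ← FreeMonoid.ofList_append, ← List.ofFn_fin_append,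
    ← sig_ofFn, sigPairAddHom_apply, MonoidAlgebra.smul_single', mul_one, sigPair_single]
  rfl

def velocityMatrix (x : Fin (n + 1) → Fin d → ℝ) (c : Fin d → Fin n) : Matrix (Fin d) (Fin d) ℝ :=
  Matrix.of fun j i => pieceVelocity x (c i) j

lemma det_velocityMatrix (x : Fin (n + 1) → Fin d → ℝ) (c : Fin d → Fin n) :
    (velocityMatrix x c).det =
      ∑ σ : Equiv.Perm (Fin d),
        ((Equiv.Perm.sign σ : ℤ) : ℝ) * ∏ i, pieceVelocity x (c i) (σ i) := by
  simp [Matrix.det_apply, velocityMatrix, Units.smul_def]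

lemma det_velocityMatrix_eq_zero (x : Fin (n + 1) → Fin d → ℝ) {c : Fin d → Fin n}
    (hc : ¬ Injective c) : (velocityMatrix x c).det = 0 := by
  obtain ⟨i, j, hij, hne⟩ := not_injective_iff.1 hc
  exact Matrix.det_zero_of_column_eq hne fun l => by simp [velocityMatrix, hij]

lemma sigPair_pwl_volElt_mul_volElt (x : Fin (n + 1) → Fin d → ℝ) :
    sigPair (pwl x) (volElt d * volElt d) =
      ∑ k : Fin (d + d) → Fin n, pieceWeight k *
        ((velocityMatrix x (k ∘ Fin.castAdd d)).det *
          (velocityMatrix x (k ∘ Fin.natAdd d)).det) := by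
  simp_rw [sigPair_volElt_mul_volElt, iteratedIntegral_pwl, Fin.prod_univ_add, Fin.append_left,
    Fin.append_right, det_velocityMatrix, sum_mul_sum, mul_sum]
  rw [sum_comm_cycle]
  refine sum_congr rfl fun k _ => sum_congr rfl fun σ _ => sum_congr rfl fun τ _ => ?_
  simp only [comp_apply]
  ring

/-- The images of the two halves have `a` and `b` elements, and by monotonicity they share at
most one point. -/
lemma add_le_succ_of_monotone_of_injective_halves {a b : ℕ} {k : Fin (a + b) → Fin n}
    (hk : Monotone k) (ha : Injective (k ∘ Fin.castAdd b)) (hb : Injective (k ∘ Fin.natAdd a)) :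
    a + b ≤ n + 1 := by
  set A := Finset.univ.image (k ∘ Fin.castAdd b)
  set B := Finset.univ.image (k ∘ Fin.natAdd a)
  have hAB : ∀ u ∈ A, ∀ v ∈ B, u ≤ v := by
    simp only [A, B, Finset.mem_image, comp_apply]
    rintro _ ⟨i, -, rfl⟩ _ ⟨j, -, rfl⟩
    exact hk (Fin.le_iff_val_le_val.2 (by simp only [Fin.val_castAdd, Fin.val_natAdd]; omega))
  have hinter : #(A ∩ B) ≤ 1 := card_le_one.2 fun u hu v hv =>
    le_antisymm (hAB u (mem_inter.1 hu).1 v (mem_inter.1 hv).2)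
      (hAB v (mem_inter.1 hv).1 u (mem_inter.1 hu).2)
  have hunion : #(A ∪ B) ≤ n := (card_le_univ _).trans_eq (Fintype.card_fin n)
  have hcard := card_union_add_card_inter A B
  rw [Finset.card_image_of_injective _ ha, Finset.card_image_of_injective _ hb, card_fin,
    card_fin] at hcard
  omega

theorem sigPair_pwl_volElt_mul_volElt_eq_zero (x : Fin (n + 1) → Fin d → ℝ)
    (hn : n + 2 ≤ d + d) : sigPair (pwl x) (volElt d * volElt d) = 0 := by
  rw [sigPair_pwl_volElt_mul_volElt]
  refine sum_eq_zero fun k _ => ?_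
  by_cases hk : Monotone k
  · by_cases ha : Injective (k ∘ Fin.castAdd d)
    · by_cases hb : Injective (k ∘ Fin.natAdd d)
      · have := add_le_succ_of_monotone_of_injective_halves hk ha hb
        omega
      · rw [det_velocityMatrix_eq_zero x hb, mul_zero, mul_zero]
    · rw [det_velocityMatrix_eq_zero x ha, zero_mul, mul_zero]
  · rw [pieceWeight_eq_zero_of_not_monotone hk, zero_mul]

end PiecewiseLinearSignature

open PiecewiseLinearSignature in
/-- `vol₃^{•2}` vanishes on all piecewise linear paths in `ℝ³` with at
most 5 control points (at most 4 segments). -/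
theorem vol3_concat_sq_vanishes_on_short_paths :
    ∀ n : ℕ, n + 1 ≤ 5 → ∀ x : Fin (n + 1) → Fin 3 → ℝ,
      sigPair (pwl x) (volElt 3 * volElt 3) = 0 := by
  intro n hn x
  exact sigPair_pwl_volElt_mul_volElt_eq_zero x (by omega)
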